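/- With \(\tau_n \in \mathbb{Q}\mathfrak{S}_n\) as the Tsetlin library element, the dimension of the kernel of the operator \(f \mapsto f\tau_n\) on \(\mathbb{Q}\mathfrak{S}_n\) equals the derangement number \(d_n\), and more generally the eigenspace for the eigenvalue \(k\) (for \(0 \le k \le n-2\) or \(k=n\)) has dimension \(d_{n,k}\), the number of permutations of \(\{1,\dots,n\}\) with exactly \(k\) fixed points. -/

import Mathlib

/-!
Write `σ_p = (cycleRange p)⁻¹`, so `τ_n = ∑_p σ_p`, and let `ι : ℚ𝔖_n → ℚ𝔖_{n+1}` extend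
permutations by fixing `0`. Since `σ_p σ_{r+1} = σ_{p.succAbove r} ι(σ_{r.predAbove p})` and
`(p, r) ↦ (p.succAbove r, r.predAbove p)` is an involution, `τ_{n+1}² = τ_{n+1} + τ_{n+1} ι(τ_n)`.
For the falling factorial polynomials `D_s = X(X-1)⋯(X-s+1)` this gives
`D_{s+1}(τ_{n+1}) = τ_{n+1} ι(D_s(τ_n))`, and the identity coefficient of `τ_{n+1} ι(x)` is that
of `x`; by induction `D_{n+1}(τ_n) = 0`, and `D_s(τ_n)` has identity coefficient `1` for `s ≤ n`.

Hence `f ↦ f τ_n` is diagonalizable with eigenvalues in `{0, …, n}`. The trace of right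
multiplication by `x` is `n!` times the identity coefficient of `x`, so for `s ≤ n`, writing
`k^(s)` for the falling factorial, `∑_k k^(s) dim E_k = n!`. Counting pairs of a permutation and
`s` ordered fixed points of it, also `∑_k k^(s) d_{n,k} = n!`. This triangular system forces
`dim E_k = d_{n,k}`; for `k > n` both sides vanish.
-/

open Equiv

/-- The Tsetlin library element `τ_n = ∑_{k=1}^n σ_k ∈ ℚ𝔖_n`, where `σ_k` has one-line
notation `k 1 2 ⋯ k̂ ⋯ n`. -/
noncomputable def tsetlin (n : ℕ) : MonoidAlgebra ℚ (Perm (Fin n)) :=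
  ∑ k : Fin n, MonoidAlgebra.of ℚ (Perm (Fin n)) (Fin.cycleRange k)⁻¹

/-- The number of permutations of `{1,…,n}` with exactly `k` fixed points. -/
noncomputable def fixCount (n k : ℕ) : ℕ :=
  Nat.card {σ : Perm (Fin n) // Nat.card {i : Fin n // σ i = i} = k}

open Polynomial Finset Module MonoidAlgebra
open scoped Nat

namespace Module.End

variable {K V : Type*} [Field K] [AddCommGroup V] [Module K V]

theorem iSup_eigenspace_eq_ker_aeval_prod (f : End K V) (s : Finset K) :
    ⨆ μ ∈ s, f.eigenspace μ = LinearMap.ker (aeval f (∏ μ ∈ s, (X - C μ))) := by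
  classical
  induction s using Finset.induction_on with
  | empty => simp [Module.End.one_eq_id]
  | insert a s ha ih =>
    rw [Finset.iSup_insert, ih, prod_insert ha, ← sup_ker_aeval_eq_ker_aeval_mul_of_coprime]
    · rw [eigenspace_def]
      simp [Algebra.algebraMap_eq_smul_one]
    · exact IsCoprime.prod_right fun μ hμ ↦
        isCoprime_X_sub_C_of_isUnit_sub (sub_ne_zero.mpr (ne_of_mem_of_not_mem hμ ha).symm).isUnit

theorem eigenspace_eq_bot_of_aeval_eq_zero (f : End K V) {p : K[X]} (hp : aeval f p = 0) {μ : K}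
    (hμ : p.eval μ ≠ 0) : f.eigenspace μ = ⊥ := by
  refine eq_bot_iff.mpr fun x hx ↦ ?_
  have hx' := aeval_apply_of_mem_apply_eq_smul (p := p) (mem_eigenspace_iff.mp hx)
  rw [hp, LinearMap.zero_apply] at hx'
  exact (smul_eq_zero.mp hx'.symm).resolve_left hμ

theorem trace_aeval_eq_sum_of_iSup_eigenspace_eq_top [FiniteDimensional K V] (f : End K V)
    (s : Finset K) (hs : ⨆ μ ∈ s, f.eigenspace μ = ⊤) (p : K[X]) :
    LinearMap.trace K V (aeval f p) = ∑ μ ∈ s, p.eval μ * finrank K (f.eigenspace μ) := by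
  classical
  have hinternal : DirectSum.IsInternal fun μ : s ↦ f.eigenspace μ := by
    rw [DirectSum.isInternal_submodule_iff_iSupIndep_and_iSup_eq_top, iSup_subtype]
    exact ⟨f.eigenspaces_iSupIndep.comp Subtype.val_injective, hs⟩
  have happly {μ : K} {x : V} (hx : x ∈ f.eigenspace μ) : aeval f p x = p.eval μ • x :=
    aeval_apply_of_mem_apply_eq_smul (mem_eigenspace_iff.mp hx)
  have hmaps (μ : s) : Set.MapsTo (aeval f p) (f.eigenspace μ) (f.eigenspace μ) := fun x hx ↦ by
    rw [SetLike.mem_coe, happly hx]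
    exact Submodule.smul_mem _ _ hx
  have hrestrict (μ : s) : (aeval f p).restrict (hmaps μ) = p.eval μ.1 • LinearMap.id :=
    LinearMap.ext fun x ↦ Subtype.ext (happly x.2)
  rw [LinearMap.trace_eq_sum_trace_restrict hinternal hmaps, ← sum_coe_sort s]
  simp only [hrestrict, map_smul, LinearMap.trace_id, smul_eq_mul]

end Module.End

theorem LinearMap.aeval_mulRight {R A : Type*} [CommSemiring R] [Semiring A] [Algebra R A]
    (a : A) (p : R[X]) : aeval (mulRight R a) p = mulRight R (aeval a p) := by
  induction p using Polynomial.induction_on' with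
  | add p q hp hq => ext x; simp [hp, hq, mul_add]
  | monomial k r =>
    ext x
    simp only [aeval_monomial, pow_mulRight, Module.End.mul_apply, Module.algebraMap_end_apply,
      mulRight_apply, Algebra.smul_def]
    rw [Algebra.left_comm]

theorem MonoidAlgebra.trace_mulRight {k G : Type*} [CommRing k] [Group G] [Fintype G]
    (x : MonoidAlgebra k G) :
    LinearMap.trace k _ (LinearMap.mulRight k x) = Fintype.card G * x.coeff 1 := by
  classical
  rw [LinearMap.trace_eq_matrix_trace k (MonoidAlgebra.basis G k), Matrix.trace]
  simp [LinearMap.toMatrix_apply, MonoidAlgebra.basis]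

theorem Polynomial.mul_aeval_eq_mul_aeval_of_mul_eq {R A : Type*} [CommSemiring R] [Semiring A]
    [Algebra R A] {a b c : A} (hac : Commute a c) (h : c * a = c * b) (p : R[X]) :
    c * aeval a p = c * aeval b p := by
  have hpow (k : ℕ) : c * a ^ k = c * b ^ k := by
    induction k with
    | zero => simp
    | succ k ih =>
      rw [pow_succ, pow_succ, ← mul_assoc, ← mul_assoc, ← ih, ← (hac.pow_left k).eq, mul_assoc,
        mul_assoc, h]
  induction p using Polynomial.induction_on' with
  | add p q hp hq => rw [map_add, map_add, mul_add, mul_add, hp, hq]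
  | monomial k r => rw [aeval_monomial, aeval_monomial, Algebra.left_comm, Algebra.left_comm, hpow]

theorem Polynomial.descPochhammer_eq_prod_range (R : Type*) [CommRing R] (n : ℕ) :
    descPochhammer R n = ∏ j ∈ range n, (X - C (j : R)) := by
  induction n with
  | zero => simp
  | succ n ih => rw [descPochhammer_succ_right, ih, prod_range_succ, map_natCast]

theorem eq_of_forall_sum_descFactorial_mul_eq {R : Type*} [Ring R] [IsDomain R] [CharZero R]
    {m : ℕ} {a b : ℕ → R}
    (h : ∀ s < m, ∑ k ∈ range m, (k.descFactorial s : R) * a k =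
      ∑ k ∈ range m, (k.descFactorial s : R) * b k) {k : ℕ} (hk : k < m) : a k = b k := by
  induction m generalizing k with
  | zero => omega
  | succ m ih =>
    have hvanish (c : ℕ → R) : ∑ k ∈ range m, (k.descFactorial m : R) * c k = 0 :=
      sum_eq_zero fun k hk ↦ by
        rw [Nat.descFactorial_eq_zero_iff_lt.mpr (mem_range.mp hk), Nat.cast_zero, zero_mul]
    have htop : a m = b m := by
      have := h m m.lt_add_one
      rw [sum_range_succ, sum_range_succ, hvanish, hvanish, Nat.descFactorial_self] at this
      exact mul_left_cancel₀ (Nat.cast_ne_zero.mpr m.factorial_ne_zero) (by simpa using this)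
    rcases Nat.lt_succ_iff_lt_or_eq.mp hk with hk | rfl
    · refine ih (fun s hs ↦ ?_) hk
      have := h s (by omega)
      rwa [sum_range_succ, sum_range_succ, htop, add_left_inj] at this
    · exact htop

namespace Equiv.Perm

variable {α : Type*} [Fintype α] [DecidableEq α]

theorem card_fixing_range_embedding {ι : Type*} [Fintype ι] (f : ι ↪ α) :
    Fintype.card {σ : Perm α // ∀ i, σ (f i) = f i} = (Fintype.card α - Fintype.card ι)! := by
  have e : Perm {a // a ∉ Set.range f} ≃ {σ : Perm α // ∀ i, σ (f i) = f i} :=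
    (Perm.subtypeEquivSubtypePerm _).trans <| Equiv.subtypeEquivRight fun σ ↦ by simp
  rw [← Fintype.card_congr e, Fintype.card_perm, Fintype.card_subtype_compl,
    Set.card_range_of_injective f.injective]

theorem sum_descFactorial_card_fixedPoints (s : ℕ) :
    ∑ σ : Perm α, (Fintype.card {a // σ a = a}).descFactorial s =
      (Fintype.card α).descFactorial s * (Fintype.card α - s)! := by
  calc ∑ σ : Perm α, (Fintype.card {a // σ a = a}).descFactorial s
      = Fintype.card (Σ σ : Perm α, Fin s ↪ {a // σ a = a}) := by
        simp [Fintype.card_embedding_eq]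
    _ = Fintype.card (Σ f : Fin s ↪ α, {σ : Perm α // ∀ i, σ (f i) = f i}) :=
        Fintype.card_congr
          { toFun x := ⟨x.2.trans (Function.Embedding.subtype _), x.1, fun i ↦ (x.2 i).2⟩
            invFun y := ⟨y.2.1, ⟨fun i ↦ ⟨y.1 i, y.2.2 i⟩, fun i j h ↦ y.1.injective congr($h.1)⟩⟩
            left_inv _ := rfl
            right_inv _ := rfl }
    _ = (Fintype.card α).descFactorial s * (Fintype.card α - s)! := by
        rw [Fintype.card_sigma, sum_congr rfl fun f _ ↦ by convert card_fixing_range_embedding f]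
        simp [Fintype.card_embedding_eq]

end Equiv.Perm

theorem sum_descFactorial_mul_fixCount (n s : ℕ) :
    ∑ k ∈ range (n + 1), k.descFactorial s * fixCount n k = n.descFactorial s * (n - s)! := by
  classical
  have hcount (k : ℕ) : fixCount n k = #{σ : Perm (Fin n) | Fintype.card {i // σ i = i} = k} := by
    simp [fixCount, Nat.card_eq_fintype_card, Fintype.card_subtype]
  have hmaps (σ : Perm (Fin n)) : Fintype.card {i // σ i = i} ∈ range (n + 1) := by
    simpa [Nat.lt_succ_iff] using Fintype.card_subtype_le (fun i ↦ σ i = i)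
  have hsum := Perm.sum_descFactorial_card_fixedPoints (α := Fin n) s
  rw [Fintype.card_fin] at hsum
  rw [← hsum, ← sum_fiberwise_of_maps_to (fun σ _ ↦ hmaps σ)]
  refine sum_congr rfl fun k _ ↦ ?_
  rw [hcount, sum_const_nat fun σ hσ ↦ by rw [(mem_filter.mp hσ).2], mul_comm]

theorem fixCount_eq_zero_of_lt {n k : ℕ} (h : n < k) : fixCount n k = 0 := by
  rw [fixCount, Nat.card_eq_zero]
  refine .inl ⟨fun ⟨σ, hσ⟩ ↦ ?_⟩
  have := Finite.card_subtype_le (fun i ↦ σ i = i)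
  rw [Nat.card_fin] at this
  omega

namespace Equiv.Perm

def finSuccHom (n : ℕ) : Perm (Fin n) →* Perm (Fin (n + 1)) where
  toFun u := decomposeFin.symm (0, u)
  map_one' := by ext x; cases x using Fin.cases <;> simp
  map_mul' u v := by ext x; cases x using Fin.cases <;> simp

@[simp] lemma finSuccHom_apply_zero {n : ℕ} (u : Perm (Fin n)) : finSuccHom n u 0 = 0 := by
  simp [finSuccHom]

@[simp] lemma finSuccHom_apply_succ {n : ℕ} (u : Perm (Fin n)) (i : Fin n) :
    finSuccHom n u i.succ = (u i).succ := by
  simp [finSuccHom]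

lemma finSuccHom_injective (n : ℕ) : Function.Injective (finSuccHom n) := fun u v h ↦ by
  ext i : 1
  simpa using congr($h i.succ)

end Equiv.Perm

open Equiv.Perm

theorem Fin.cycleRange_inv_mul_cycleRange_succ_inv {n : ℕ} (p : Fin (n + 1)) (r : Fin n) :
    (p.cycleRange)⁻¹ * (r.succ.cycleRange)⁻¹ =
      ((p.succAbove r).cycleRange)⁻¹ * finSuccHom _ ((r.predAbove p).cycleRange)⁻¹ := by
  obtain _ | n := n
  · exact r.elim0
  ext x : 1
  cases x using Fin.cases with
  | zero => simp [Perm.inv_def]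
  | succ x =>
    cases x using Fin.cases with
    | zero =>
      simp only [Perm.inv_def, Perm.coe_mul, Function.comp_apply, Fin.cycleRange_symm_succ,
        Fin.cycleRange_symm_zero, finSuccHom_apply_succ, Fin.succ_succAbove_zero,
        Fin.succAbove_succAbove_predAbove]
    | succ y =>
      simp only [Perm.inv_def, Perm.coe_mul, Function.comp_apply, Fin.cycleRange_symm_succ,
        finSuccHom_apply_succ, Fin.succ_succAbove_succ, Fin.succAbove_succAbove_succAbove_predAbove]

def Fin.succAbovePredAboveInvolution (n : ℕ) : Perm (Fin (n + 1) × Fin n) :=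
  Function.Involutive.toPerm (fun pr ↦ (pr.1.succAbove pr.2, pr.2.predAbove pr.1)) fun pr ↦ by
    simp [Fin.succAbove_succAbove_predAbove, Fin.predAbove_predAbove_succAbove]

theorem tsetlin_succ (n : ℕ) :
    tsetlin (n + 1) = 1 + ∑ r : Fin n, of ℚ _ (r.succ.cycleRange)⁻¹ := by
  rw [tsetlin, Fin.sum_univ_succ, Fin.cycleRange_zero, inv_one, map_one]

theorem tsetlin_mul_self (n : ℕ) :
    tsetlin (n + 1) * tsetlin (n + 1) =
      tsetlin (n + 1) + tsetlin (n + 1) * mapDomainAlgHom ℚ ℚ (finSuccHom n) (tsetlin n) := by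
  calc tsetlin (n + 1) * tsetlin (n + 1)
      = tsetlin (n + 1) + tsetlin (n + 1) * ∑ r : Fin n, of ℚ _ (r.succ.cycleRange)⁻¹ := by
        nth_rw 2 [tsetlin_succ]
        rw [mul_add, mul_one]
    _ = tsetlin (n + 1) + ∑ pr : Fin (n + 1) × Fin n,
          of ℚ _ (pr.1.cycleRange)⁻¹ * of ℚ _ (pr.2.succ.cycleRange)⁻¹ := by
        rw [tsetlin, Finset.sum_mul_sum, Fintype.sum_prod_type]
    _ = tsetlin (n + 1) + ∑ pr : Fin (n + 1) × Fin n,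
          of ℚ _ (pr.1.cycleRange)⁻¹ *
            mapDomainAlgHom ℚ ℚ (finSuccHom n) (of ℚ _ (pr.2.cycleRange)⁻¹) := by
        congr 1
        refine Fintype.sum_equiv (Fin.succAbovePredAboveInvolution n) _ _ fun pr ↦ ?_
        simp only [of_apply, single_mul_single, Fin.cycleRange_inv_mul_cycleRange_succ_inv,
          map_inv, mul_one, mapDomainAlgHom_apply, mapDomain_single]
        rfl
    _ = tsetlin (n + 1) + tsetlin (n + 1) * mapDomainAlgHom ℚ ℚ (finSuccHom n) (tsetlin n) := by
        rw [tsetlin, tsetlin, map_sum, Finset.sum_mul_sum, Fintype.sum_prod_type]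

theorem coeff_tsetlin_finSuccHom (n : ℕ) (v : Perm (Fin n)) :
    (tsetlin (n + 1)).coeff (finSuccHom n v) = if v = 1 then 1 else 0 := by
  have hne (r : Fin n) : (r.succ.cycleRange)⁻¹ ≠ finSuccHom n v := fun h ↦ by
    simpa [Perm.inv_def] using congr($h 0)
  have hone : 1 = finSuccHom n v ↔ v = 1 := by
    rw [eq_comm, ← (finSuccHom n).map_one, (finSuccHom_injective n).eq_iff]
  simp [tsetlin_succ, MonoidAlgebra.one_def, Finsupp.single_apply, hne, hone]

theorem coeff_one_tsetlin_mul_mapDomainAlgHom (n : ℕ) (x : MonoidAlgebra ℚ (Perm (Fin n))) :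
    (tsetlin (n + 1) * mapDomainAlgHom ℚ ℚ (finSuccHom n) x).coeff 1 = x.coeff 1 := by
  induction x using MonoidAlgebra.induction_linear with
  | zero => simp
  | add x y hx hy =>
    rw [map_add, mul_add, MonoidAlgebra.coeff_add, MonoidAlgebra.coeff_add, Finsupp.add_apply,
      Finsupp.add_apply, hx, hy]
  | single u a => simp [← map_inv, coeff_tsetlin_finSuccHom, Finsupp.single_apply]

theorem aeval_tsetlin_descPochhammer_succ (n s : ℕ) :
    aeval (tsetlin (n + 1)) (descPochhammer ℚ (s + 1)) =
      tsetlin (n + 1) *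
        mapDomainAlgHom ℚ ℚ (finSuccHom n) (aeval (tsetlin n) (descPochhammer ℚ s)) := by
  rw [descPochhammer_succ_left, map_mul, aeval_X, aeval_comp, ← aeval_algHom_apply, map_sub,
    aeval_X, map_one]
  refine mul_aeval_eq_mul_aeval_of_mul_eq ((Commute.refl _).sub_left (Commute.one_left _)) ?_ _
  rw [mul_sub, mul_one, tsetlin_mul_self, add_sub_cancel_left]

theorem aeval_tsetlin_descPochhammer_of_lt {n s : ℕ} (h : n < s) :
    aeval (tsetlin n) (descPochhammer ℚ s) = 0 := by
  induction n generalizing s with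
  | zero =>
    obtain ⟨s, rfl⟩ := Nat.exists_eq_add_one_of_ne_zero h.ne'
    simp [descPochhammer_succ_left, tsetlin]
  | succ n ih =>
    obtain ⟨s, rfl⟩ := Nat.exists_eq_add_one_of_ne_zero (by omega : s ≠ 0)
    rw [aeval_tsetlin_descPochhammer_succ, ih (by omega), map_zero, mul_zero]

theorem coeff_one_aeval_tsetlin_descPochhammer {n s : ℕ} (h : s ≤ n) :
    (aeval (tsetlin n) (descPochhammer ℚ s)).coeff 1 = 1 := by
  induction s generalizing n with
  | zero => simp
  | succ s ih =>
    obtain ⟨n, rfl⟩ := Nat.exists_eq_add_one_of_ne_zero (by omega : n ≠ 0)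
    rw [aeval_tsetlin_descPochhammer_succ, coeff_one_tsetlin_mul_mapDomainAlgHom, ih (by omega)]

theorem aeval_mulRight_tsetlin_descPochhammer (n : ℕ) :
    aeval (LinearMap.mulRight ℚ (tsetlin n)) (descPochhammer ℚ (n + 1)) = 0 := by
  rw [LinearMap.aeval_mulRight, aeval_tsetlin_descPochhammer_of_lt n.lt_add_one,
    LinearMap.mulRight_zero_eq_zero]

theorem iSup_eigenspace_mulRight_tsetlin (n : ℕ) :
    ⨆ μ ∈ (range (n + 1)).image (Nat.cast : ℕ → ℚ),
      End.eigenspace (LinearMap.mulRight ℚ (tsetlin n)) μ = ⊤ := by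
  rw [End.iSup_eigenspace_eq_ker_aeval_prod, prod_image fun _ _ _ _ h ↦ Nat.cast_injective h,
    ← descPochhammer_eq_prod_range, aeval_mulRight_tsetlin_descPochhammer, LinearMap.ker_zero]

theorem sum_descFactorial_mul_finrank_eigenspace_tsetlin {n s : ℕ} (hs : s ≤ n) :
    ∑ k ∈ range (n + 1), (k.descFactorial s : ℚ) *
      finrank ℚ (End.eigenspace (LinearMap.mulRight ℚ (tsetlin n)) k) = n ! := by
  have h := End.trace_aeval_eq_sum_of_iSup_eigenspace_eq_top _ _
    (iSup_eigenspace_mulRight_tsetlin n) (descPochhammer ℚ s)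
  rw [LinearMap.aeval_mulRight, MonoidAlgebra.trace_mulRight,
    coeff_one_aeval_tsetlin_descPochhammer hs, sum_image fun _ _ _ _ h ↦ Nat.cast_injective h] at h
  simpa [descPochhammer_eval_eq_descFactorial, Fintype.card_perm] using h.symm

theorem stmt_8_general (n k : ℕ) :
    Module.finrank ℚ
        (Module.End.eigenspace
          (LinearMap.mulRight ℚ (tsetlin n) :
            Module.End ℚ (MonoidAlgebra ℚ (Perm (Fin n)))) (k : ℚ)) =
      fixCount n k := by
  rcases le_or_gt k n with hkn | hnk
  · have key := eq_of_forall_sum_descFactorial_mul_eq (m := n + 1)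
      (a := fun k ↦ (finrank ℚ (End.eigenspace (LinearMap.mulRight ℚ (tsetlin n)) k) : ℚ))
      (b := fun k ↦ (fixCount n k : ℚ)) (fun s hs ↦ ?_) (Nat.lt_succ_of_le hkn)
    · exact_mod_cast key
    · rw [sum_descFactorial_mul_finrank_eigenspace_tsetlin (Nat.le_of_lt_succ hs),
        ← Nat.factorial_mul_descFactorial (Nat.le_of_lt_succ hs), mul_comm]
      exact_mod_cast (sum_descFactorial_mul_fixCount n s).symm
  · rw [fixCount_eq_zero_of_lt hnk, End.eigenspace_eq_bot_of_aeval_eq_zero _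
      (aeval_mulRight_tsetlin_descPochhammer n), finrank_bot]
    rw [descPochhammer_eval_eq_descFactorial, Nat.cast_ne_zero]
    exact Nat.descFactorial_eq_zero_iff_lt.not.mpr (by omega)

/-- The eigenspace of the uniform Tsetlin library operator `f ↦ f τ_n` on `ℚ𝔖_n` for the
eigenvalue `k` (for `0 ≤ k ≤ n-2` or `k = n`) has dimension `d_{n,k}`, the number of
permutations with exactly `k` fixed points; in particular the kernel (`k = 0`) has
dimension the derangement number `d_n`. -/
theorem stmt_8 (n k : ℕ) (hk : k + 2 ≤ n ∨ k = n) :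
    Module.finrank ℚ
        (Module.End.eigenspace
          (LinearMap.mulRight ℚ (tsetlin n) :
            Module.End ℚ (MonoidAlgebra ℚ (Perm (Fin n)))) (k : ℚ)) =
      fixCount n k :=
  stmt_8_general n k
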